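/- For every σ ∈ 𝔓_n and every i ∈ {1, …, n}, there exists an element v ∈ 𝕃_n such that θ(σ)(x_i) = [x_i, v]. -/

import Mathlib

/-! Drinfeld–Kohno Lie algebra and the infinitesimal braid action. -/

open FreeLieAlgebra

/-- The free Lie algebra `𝕃_n` on generators `x_1, …, x_n`. -/
abbrev FreeLie (K : Type*) [Field K] (n : ℕ) := FreeLieAlgebra K (Fin n)

/-- Index type for the generators `A_{i,j}` (`i ≠ j`) of the Drinfeld–Kohno Lie algebra. -/
abbrev DKGenIdx (n : ℕ) := {p : Fin n × Fin n // p.1 ≠ p.2}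

/-- The set of infinitesimal braid relations inside the free Lie algebra on the `A_{i,j}`. -/
def dkRels (K : Type*) [Field K] (n : ℕ) : Set (FreeLieAlgebra K (DKGenIdx n)) :=
  (⋃ (i : Fin n) (j : Fin n) (h : i ≠ j),
      {of K (⟨(i, j), h⟩ : DKGenIdx n) - of K (⟨(j, i), h.symm⟩ : DKGenIdx n)}) ∪
  (⋃ (i : Fin n) (j : Fin n) (k : Fin n) (hij : i ≠ j) (hjk : j ≠ k) (hik : i ≠ k),
      {⁅of K (⟨(i, k), hik⟩ : DKGenIdx n),
        of K (⟨(i, j), hij⟩ : DKGenIdx n) + of K (⟨(j, k), hjk⟩ : DKGenIdx n)⁆}) ∪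
  (⋃ (i : Fin n) (j : Fin n) (k : Fin n) (l : Fin n)
      (hij : i ≠ j) (hkl : k ≠ l) (_ : i ≠ k) (_ : i ≠ l) (_ : j ≠ k) (_ : j ≠ l),
      {⁅of K (⟨(i, j), hij⟩ : DKGenIdx n), of K (⟨(k, l), hkl⟩ : DKGenIdx n)⁆})

/-- The Lie ideal generated by the infinitesimal braid relations. -/
noncomputable def dkIdeal (K : Type*) [Field K] (n : ℕ) : LieIdeal K (FreeLieAlgebra K (DKGenIdx n)) :=
  LieSubmodule.lieSpan K _ (dkRels K n)

/-- The Drinfeld–Kohno Lie algebra `𝔓_n`. -/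
abbrev DK (K : Type*) [Field K] (n : ℕ) :=
  FreeLieAlgebra K (DKGenIdx n) ⧸ dkIdeal K n

/-- The generator `A_{i,j}` of the Drinfeld–Kohno Lie algebra `𝔓_n`. -/
noncomputable def dkGen (K : Type*) [Field K] {n : ℕ} {i j : Fin n} (h : i ≠ j) : DK K n :=
  LieSubmodule.Quotient.mk (N := dkIdeal K n) (of K (⟨(i, j), h⟩ : DKGenIdx n))

/-!
The derivations `D` of `𝕃_n` with `D x_i ∈ ⁅x_i, 𝕃_n⁆` form a Lie subalgebra of `Der(𝕃_n)`:
closure under brackets is the Leibniz rule combined with the Jacobi identity. Its preimage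
under `θ` is a Lie subalgebra of `𝔓_n` containing every generator, because `θ(A_{j,k}) x_i`
is `⁅x_i, x_k⁆`, `⁅x_i, x_j⁆` or `0`; as the `A_{j,k}` generate `𝔓_n`, the preimage is everything.
-/

namespace FreeLieAlgebra

variable {R X : Type*} [CommRing R]

theorem lieSpan_range_of : LieSubalgebra.lieSpan R (FreeLieAlgebra R X) (Set.range (of R)) = ⊤ := by
  let S := LieSubalgebra.lieSpan R (FreeLieAlgebra R X) (Set.range (of R))
  have hincl : S.incl.comp (lift R fun x => ⟨of R x, LieSubalgebra.subset_lieSpan ⟨x, rfl⟩⟩) =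
      LieHom.id :=
    hom_ext fun x => by simp
  rw [eq_top_iff]
  intro y _
  rw [← LieHom.id_apply (R := R) y, ← hincl]
  exact Subtype.prop _

end FreeLieAlgebra

def LieSubmodule.Quotient.mkLieHom {R L : Type*} [CommRing R] [LieRing L] [LieAlgebra R L]
    (I : LieIdeal R L) : L →ₗ⁅R⁆ L ⧸ I :=
  { (I : Submodule R L).mkQ with map_lie' := rfl }

namespace LieDerivation

variable {R M : Type*} [CommRing R] [LieRing M] [LieAlgebra R M]

def adRangeAt (x : M) : LieSubalgebra R (LieDerivation R M M) where
  carrier := {D | ∃ v, D x = ⁅x, v⁆}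
  add_mem' := by
    rintro D E ⟨v, hv⟩ ⟨w, hw⟩
    exact ⟨v + w, by simp [hv, hw]⟩
  zero_mem' := ⟨0, by simp⟩
  smul_mem' := by
    rintro c D ⟨v, hv⟩
    exact ⟨c • v, by simp [hv]⟩
  lie_mem' := by
    rintro D E ⟨v, hv⟩ ⟨w, hw⟩
    -- Jacobi: `⁅⁅x, v⁆, w⁆ - ⁅⁅x, w⁆, v⁆ = ⁅x, ⁅v, w⁆⁆`.
    refine ⟨⁅v, w⁆ + (D w - E v), ?_⟩
    rw [lie_apply, hv, hw, apply_lie_eq_add, apply_lie_eq_add, hv, hw, lie_add, lie_sub,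
      lie_lie x v w, ← lie_skew ⁅x, w⁆ v]
    abel

theorem mem_adRangeAt_of_apply_of_eq {X : Type*} [DecidableEq X] {i j k : X}
    (D : LieDerivation R (FreeLieAlgebra R X) (FreeLieAlgebra R X))
    (hD : D (of R i) =
      if i = j then ⁅of R j, of R k⁆ else if i = k then ⁅of R k, of R j⁆ else 0) :
    D ∈ adRangeAt (of R i) := by
  by_cases hij : i = j
  · subst hij
    exact ⟨of R k, by simpa using hD⟩
  by_cases hik : i = k
  · subst hik
    exact ⟨of R j, by simpa [hij] using hD⟩
  exact ⟨0, by simpa [hij, hik] using hD⟩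

end LieDerivation

theorem infinitesimal_braid_action_apply_gen_general (K : Type*) [Field K] (n : ℕ)
    (θ : DK K n →ₗ⁅K⁆ LieDerivation K (FreeLie K n) (FreeLie K n))
    (hθ : ∀ (i j : Fin n) (h : i ≠ j) (k : Fin n),
      θ (dkGen K h) (of K k) =
        if k = i then ⁅of K i, of K j⁆
        else if k = j then ⁅of K j, of K i⁆
        else 0) :
    ∀ (σ : DK K n) (i : Fin n), ∃ v : FreeLie K n, θ σ (of K i) = ⁅of K i, v⁆ := by
  intro σ i
  obtain ⟨y, rfl⟩ := LieSubmodule.Quotient.surjective_mk' (dkIdeal K n) σ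
  let S := (LieDerivation.adRangeAt (of K i)).comap
    (θ.comp (LieSubmodule.Quotient.mkLieHom (dkIdeal K n)))
  have hgen : Set.range (of K) ⊆ (S : Set (FreeLieAlgebra K (DKGenIdx n))) := by
    rintro _ ⟨⟨⟨j, k⟩, hjk⟩, rfl⟩
    exact LieDerivation.mem_adRangeAt_of_apply_of_eq _ (hθ j k hjk i)
  exact LieSubalgebra.lieSpan_le.mpr hgen (by simp [lieSpan_range_of])

/-- For every `σ ∈ 𝔓_n` and every generator `x_i` of `𝕃_n`,
there exists `v ∈ 𝕃_n` with `θ(σ)(x_i) = [x_i, v]`. -/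
theorem infinitesimal_braid_action_apply_gen (K : Type*) [Field K] (n : ℕ) (hn : 2 ≤ n)
    (θ : DK K n →ₗ⁅K⁆ LieDerivation K (FreeLie K n) (FreeLie K n))
    (hθ : ∀ (i j : Fin n) (h : i ≠ j) (k : Fin n),
      θ (dkGen K h) (of K k) =
        if k = i then ⁅of K i, of K j⁆
        else if k = j then ⁅of K j, of K i⁆
        else 0) :
    ∀ (σ : DK K n) (i : Fin n), ∃ v : FreeLie K n, θ σ (of K i) = ⁅of K i, v⁆ :=
  infinitesimal_braid_action_apply_gen_general K n θ hθ
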